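/- arXiv:2304.06242 — 2 statements merged into one kernel-verified Lean document; each statement's English description precedes it below -/
import Mathlib

section
/- Let q = 2p/(p-2) and q' = 2p/(p+2) (the Hölder conjugate of q with respect to 2, i.e. 1/q + 1/q' = 1). If T ∈ B(L²M) satisfies |||T|||_p ≤ 1, then T maps the unit ball of L^qM into the unit ball of L^{q'}M; that is, ‖Tξ‖_{q'} ≤ |||T|||_p ‖ξ‖_q for all ξ ∈ L^qM ⊆ L²M. -/
noncomputable section

variable {H : Type*} [NormedAddCommGroup H] [InnerProductSpace ℂ H] [CompleteSpace H]

/-- A standard-form datum for a von Neumann algebra `M ⊆ B(H)`: a unit trace vector `Ω`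
which is cyclic for `M` and for its commutant (hence separating), implementing a tracial
state `τ(x) = ⟨xΩ, Ω⟩` on `M`.  This encodes a tracial von Neumann algebra `(M, τ)`
acting standardly on `H = L²(M, τ)`. -/
structure StandardForm (M : VonNeumannAlgebra H) where
  Ω : H
  norm_Ω : ‖Ω‖ = 1
  tracial : ∀ x ∈ M, ∀ y ∈ M,
    (inner ℂ ((x * y : H →L[ℂ] H) Ω) Ω : ℂ) = inner ℂ ((y * x : H →L[ℂ] H) Ω) Ω
  cyclic : Dense ((fun T : H →L[ℂ] H => T Ω) '' (M : Set (H →L[ℂ] H)))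
  cyclic' : Dense ((fun T : H →L[ℂ] H => T Ω) '' (M.commutant : Set (H →L[ℂ] H)))

variable {M : VonNeumannAlgebra H}

/-- The trace on `B(H)` induced by the trace vector: `τ(T) = ⟨TΩ, Ω⟩`. -/
def SFtrace (sf : StandardForm M) (T : H →L[ℂ] H) : ℂ := inner ℂ (T sf.Ω) sf.Ω

/-- The noncommutative `L^p`-norm `‖x‖_p = τ(|x|^p)^{1/p} = τ((x^*x)^{p/2})^{1/p}`. -/
def pNorm (sf : StandardForm M) (p : ℝ) (x : H →L[ℂ] H) : ℝ :=
  (SFtrace sf (cfc (fun t : ℝ => t ^ (p / 2)) (star x * x))).re ^ (1 / p)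

/-- The set of values `‖φ(xTy)‖` over `‖T‖ ≤ 1`, `x, y ∈ M`, `‖x‖_p, ‖y‖_p ≤ 1`,
whose supremum is `‖φ‖_{B^*(p)}`. -/
def dualSet (sf : StandardForm M) (p : ℝ) (φ : (H →L[ℂ] H) →L[ℂ] ℂ) : Set ℝ :=
  {r | ∃ x ∈ M, ∃ y ∈ M, ∃ T : H →L[ℂ] H,
    ‖T‖ ≤ 1 ∧ pNorm sf p x ≤ 1 ∧ pNorm sf p y ≤ 1 ∧ r = ‖φ (x * T * y)‖}

/-- Membership in `B^*(p)`: the defining supremum `‖φ‖_{B^*(p)}` is finite. -/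
def MemBp (sf : StandardForm M) (p : ℝ) (φ : (H →L[ℂ] H) →L[ℂ] ℂ) : Prop :=
  BddAbove (dualSet sf p φ)

/-- The norm `‖φ‖_{B^*(p)}`. -/
def BpNorm (sf : StandardForm M) (p : ℝ) (φ : (H →L[ℂ] H) →L[ℂ] ℂ) : ℝ :=
  sSup (dualSet sf p φ)

/-- The norm `|||T|||_p = sup {|φ(T)| : φ ∈ B^*(p), ‖φ‖_{B^*(p)} ≤ 1}`. -/
def tripNorm (sf : StandardForm M) (p : ℝ) (T : H →L[ℂ] H) : ℝ :=
  sSup {r | ∃ φ : (H →L[ℂ] H) →L[ℂ] ℂ, MemBp sf p φ ∧ BpNorm sf p φ ≤ 1 ∧ r = ‖φ T‖}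

/-- The set of values `‖yξ‖₂` over `y ∈ M` with `‖y‖_p ≤ 1`; by the noncommutative
Hölder inequality its supremum is the `L^q` norm `‖ξ‖_q` of the vector `ξ ∈ L²M`,
where `q = 2p/(p-2)` (i.e. `1/p + 1/q = 1/2`). -/
def vecLqSet (sf : StandardForm M) (p : ℝ) (ξ : H) : Set ℝ :=
  {r | ∃ y ∈ M, pNorm sf p y ≤ 1 ∧ r = ‖y ξ‖}

/-- `ξ ∈ L^qM`, for `q = 2p/(p-2)`. -/
def MemLq (sf : StandardForm M) (p : ℝ) (ξ : H) : Prop := BddAbove (vecLqSet sf p ξ)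

/-- The norm `‖ξ‖_q` of a vector `ξ ∈ L^qM ⊆ L²M`, for `q = 2p/(p-2)`. -/
def LqNorm (sf : StandardForm M) (p : ℝ) (ξ : H) : ℝ := sSup (vecLqSet sf p ξ)

/-- The norm `‖ζ‖_{q'}` of a vector `ζ ∈ L²M ⊆ L^{q'}M`, `q' = 2p/(p+2)`, given by
duality with `L^qM`, `q = 2p/(p-2)`:  `‖ζ‖_{q'} = sup {|⟨ζ, ξ⟩| : ξ ∈ L^qM, ‖ξ‖_q ≤ 1}`. -/
def LqDualNorm (sf : StandardForm M) (p : ℝ) (ζ : H) : ℝ :=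
  sSup {r | ∃ ξ : H, MemLq sf p ξ ∧ LqNorm sf p ξ ≤ 1 ∧ r = ‖(inner ℂ ξ ζ : ℂ)‖}

/-! For `‖η‖_q ≤ 1` the vector functional `ω(S) = ⟨η, Sξ⟩` satisfies
`|ω(xSy)| = |⟨x^*η, S(yξ)⟩| ≤ ‖x^*η‖ ‖yξ‖ ≤ ‖η‖_q ‖ξ‖_q` whenever `‖S‖ ≤ 1` and
`‖x‖_p, ‖y‖_p ≤ 1`, so `‖ω‖_{B^*(p)} ≤ ‖ξ‖_q` and `|⟨η, Tξ⟩| = |ω(T)| ≤ |||T|||_p ‖ξ‖_q`.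
The one nontrivial input is `‖x^*‖_p = ‖x‖_p`, i.e. `τ(f(xx^*)) = τ(f(x^*x))` for
`f(t) = t^{p/2}`: traciality gives this for polynomials `f`, and uniform polynomial
approximation on the spectra extends it to continuous `f`. -/

open Polynomial

section Moments

variable {A B : Type*}

theorem map_mul_pow_comm [Monoid A] (τ : A → B) {S : Type*} [SetLike S A] [SubmonoidClass S A]
    {s : S} (hτ : ∀ a ∈ s, ∀ b ∈ s, τ (a * b) = τ (b * a)) {a b : A} (ha : a ∈ s) (hb : b ∈ s) :
    ∀ n : ℕ, τ ((a * b) ^ n) = τ ((b * a) ^ n)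
  | 0 => by simp only [pow_zero]
  | n + 1 => by
    have hsplit : (a * b) ^ (n + 1) = a * ((b * a) ^ n * b) := by
      rw [pow_succ, ← mul_assoc, mul_pow_mul, mul_assoc]
    rw [hsplit, hτ a ha _ (mul_mem (pow_mem (mul_mem hb ha) n) hb), mul_assoc, ← pow_succ]

variable [CStarAlgebra A] [NormedAddCommGroup B] [NormedSpace ℝ B] (τ : A →L[ℝ] B)

theorem map_aeval_eq_of_map_pow_eq {a b : A} (h : ∀ n : ℕ, τ (a ^ n) = τ (b ^ n)) (P : ℝ[X]) :
    τ (aeval a P) = τ (aeval b P) := by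
  simp only [aeval_eq_sum_range, map_sum, map_smul, h]

theorem norm_map_cfc_sub_map_aeval_le {a : A} (ha : IsSelfAdjoint a) {f : ℝ → ℝ}
    (hf : ContinuousOn f (spectrum ℝ a)) (P : ℝ[X]) {ε : ℝ} (hε : 0 ≤ ε)
    (hP : ∀ t ∈ spectrum ℝ a, |P.eval t - f t| ≤ ε) :
    ‖τ (cfc f a) - τ (aeval a P)‖ ≤ ‖τ‖ * ε := by
  rw [← map_sub, ← cfc_polynomial P a, ← cfc_sub f (fun t => P.eval t) a]
  refine τ.le_opNorm_of_le (norm_cfc_le hε fun t ht => ?_)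
  rw [Real.norm_eq_abs, abs_sub_comm]
  exact hP t ht

theorem map_cfc_eq_of_map_pow_eq {a b : A} (ha : IsSelfAdjoint a) (hb : IsSelfAdjoint b)
    (h : ∀ n : ℕ, τ (a ^ n) = τ (b ^ n)) {f : ℝ → ℝ} (hf : Continuous f) :
    τ (cfc f a) = τ (cfc f b) := by
  obtain ⟨R, hR⟩ :=
    ((spectrum.isCompact (𝕜 := ℝ) a).union (spectrum.isCompact b)).isBounded.subset_closedBall 0
  rw [Real.closedBall_eq_Icc, zero_sub, zero_add] at hR
  refine eq_of_forall_dist_le fun ε hε => ?_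
  set δ := ε / (2 * (‖τ‖ + 1))
  have hδ : 0 < δ := by positivity
  have hτδ : ‖τ‖ * δ ≤ ε / 2 := by
    rw [mul_div_assoc', div_le_div_iff₀ (by positivity) two_pos]
    nlinarith [norm_nonneg τ]
  obtain ⟨P, hP⟩ := exists_polynomial_near_of_continuousOn (-R) R f hf.continuousOn δ hδ
  have near : ∀ c : A, IsSelfAdjoint c → spectrum ℝ c ⊆ Set.Icc (-R) R →
      ‖τ (cfc f c) - τ (aeval c P)‖ ≤ ε / 2 := fun c hc hsub =>
    (norm_map_cfc_sub_map_aeval_le τ hc hf.continuousOn P hδ.le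
      fun t ht => (hP t (hsub ht)).le).trans hτδ
  calc dist (τ (cfc f a)) (τ (cfc f b))
      = ‖(τ (cfc f a) - τ (aeval a P)) - (τ (cfc f b) - τ (aeval b P))‖ := by
        rw [dist_eq_norm, map_aeval_eq_of_map_pow_eq τ h]; abel_nf
    _ ≤ ε / 2 + ε / 2 := (norm_sub_le _ _).trans (add_le_add
        (near a ha (Set.subset_union_left.trans hR)) (near b hb (Set.subset_union_right.trans hR)))
    _ = ε := add_halves ε

end Moments

namespace StandardForm

variable (sf : StandardForm M)

def traceCLM : (H →L[ℂ] H) →L[ℝ] ℂ :=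
  LinearMap.mkContinuous
    { toFun := SFtrace sf
      map_add' := fun S T => by simp only [SFtrace, add_apply, inner_add_left]
      map_smul' := fun r T => by
        simp only [SFtrace, smul_apply, RingHom.id_apply]
        exact inner_smul_real_left (𝕜 := ℂ) _ _ r }
    1 fun T => calc
      ‖SFtrace sf T‖ ≤ ‖T sf.Ω‖ * ‖sf.Ω‖ := norm_inner_le_norm _ _
      _ ≤ ‖T‖ * ‖sf.Ω‖ * ‖sf.Ω‖ := by gcongr; exact T.le_opNorm _
      _ = 1 * ‖T‖ := by rw [sf.norm_Ω]; ring

theorem SFtrace_one : SFtrace sf 1 = 1 := by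
  simp [SFtrace, inner_self_eq_norm_sq_to_K, sf.norm_Ω]

theorem SFtrace_cfc_mul_star {x : H →L[ℂ] H} (hx : x ∈ M) {f : ℝ → ℝ} (hf : Continuous f) :
    SFtrace sf (cfc f (x * star x)) = SFtrace sf (cfc f (star x * x)) :=
  map_cfc_eq_of_map_pow_eq sf.traceCLM (.mul_star_self x) (.star_mul_self x)
    (map_mul_pow_comm _ sf.tracial hx (star_mem hx)) hf

end StandardForm

section Norms

variable (sf : StandardForm M) {p : ℝ}

theorem pNorm_star (hp : 0 ≤ p) {x : H →L[ℂ] H} (hx : x ∈ M) :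
    pNorm sf p (star x) = pNorm sf p x := by
  rw [pNorm, pNorm, star_star,
    sf.SFtrace_cfc_mul_star hx (Real.continuous_rpow_const (by positivity))]

theorem pNorm_one : pNorm sf p 1 = 1 := by
  rw [pNorm, star_one, one_mul, cfc_apply_one, Real.one_rpow, map_one, sf.SFtrace_one,
    Complex.one_re, Real.one_rpow]

theorem norm_apply_le_LqNorm {ξ : H} (hξ : MemLq sf p ξ) {y : H →L[ℂ] H} (hy : y ∈ M)
    (hyp : pNorm sf p y ≤ 1) : ‖y ξ‖ ≤ LqNorm sf p ξ :=
  le_csSup hξ ⟨y, hy, hyp, rfl⟩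

theorem norm_le_LqNorm {ξ : H} (hξ : MemLq sf p ξ) : ‖ξ‖ ≤ LqNorm sf p ξ :=
  norm_apply_le_LqNorm sf hξ (one_mem M) (pNorm_one sf).le

theorem LqNorm_nonneg {ξ : H} (hξ : MemLq sf p ξ) : 0 ≤ LqNorm sf p ξ :=
  (norm_nonneg ξ).trans (norm_le_LqNorm sf hξ)

theorem norm_apply_le_BpNorm_mul {φ : (H →L[ℂ] H) →L[ℂ] ℂ} (hφ : MemBp sf p φ) (S : H →L[ℂ] H) :
    ‖φ S‖ ≤ BpNorm sf p φ * ‖S‖ := by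
  have hunit : ∀ S : H →L[ℂ] H, ‖S‖ ≤ 1 → ‖φ S‖ ≤ BpNorm sf p φ := fun S hS =>
    le_csSup hφ ⟨1, one_mem M, 1, one_mem M, S, hS, (pNorm_one sf).le, (pNorm_one sf).le,
      by rw [one_mul, mul_one]⟩
  rcases eq_or_ne S 0 with rfl | hS
  · simp
  have hSpos : 0 < ‖S‖ := norm_pos_iff.mpr hS
  have hscaled := hunit (‖S‖⁻¹ • S) <| by
    rw [norm_smul, norm_inv, norm_norm, inv_mul_cancel₀ hSpos.ne']
  rw [← Complex.coe_smul, map_smul, norm_smul, Complex.norm_real, norm_inv, norm_norm,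
    inv_mul_le_iff₀ hSpos] at hscaled
  linarith

theorem BpNorm_nonneg {φ : (H →L[ℂ] H) →L[ℂ] ℂ} (hφ : MemBp sf p φ) : 0 ≤ BpNorm sf p φ :=
  le_csSup hφ ⟨1, one_mem M, 1, one_mem M, 0, by simp, (pNorm_one sf).le, (pNorm_one sf).le,
    by simp⟩

theorem tripNorm_bddAbove (T : H →L[ℂ] H) :
    BddAbove {r | ∃ φ : (H →L[ℂ] H) →L[ℂ] ℂ, MemBp sf p φ ∧ BpNorm sf p φ ≤ 1 ∧ r = ‖φ T‖} := by
  refine ⟨‖T‖, ?_⟩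
  rintro _ ⟨φ, hφ, hφ1, rfl⟩
  exact (norm_apply_le_BpNorm_mul sf hφ T).trans (mul_le_of_le_one_left (norm_nonneg T) hφ1)

theorem norm_apply_le_tripNorm {φ : (H →L[ℂ] H) →L[ℂ] ℂ} (hφ : ∀ s ∈ dualSet sf p φ, s ≤ 1)
    (T : H →L[ℂ] H) : ‖φ T‖ ≤ tripNorm sf p T :=
  le_csSup (tripNorm_bddAbove sf T) ⟨φ, ⟨1, hφ⟩, Real.sSup_le hφ zero_le_one, rfl⟩

theorem tripNorm_nonneg (T : H →L[ℂ] H) : 0 ≤ tripNorm sf p T := by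
  have hzero : ∀ s ∈ dualSet sf p 0, s ≤ 1 := by
    rintro _ ⟨-, -, -, -, -, -, -, -, -, -, rfl⟩
    simp
  simpa using norm_apply_le_tripNorm sf hzero T

theorem norm_apply_le_tripNorm_mul_BpNorm {φ : (H →L[ℂ] H) →L[ℂ] ℂ} (hφ : MemBp sf p φ)
    (T : H →L[ℂ] H) : ‖φ T‖ ≤ tripNorm sf p T * BpNorm sf p φ := by
  rcases (BpNorm_nonneg sf hφ).eq_or_lt with hzero | hpos
  · simpa [← hzero] using norm_apply_le_BpNorm_mul sf hφ T
  set b := BpNorm sf p φ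
  have hscale : ∀ S, ‖(b⁻¹ : ℂ) • φ S‖ = b⁻¹ * ‖φ S‖ := fun S => by
    rw [norm_smul, norm_inv, Complex.norm_real, Real.norm_of_nonneg hpos.le]
  have hnormalized : ∀ s ∈ dualSet sf p ((b⁻¹ : ℂ) • φ), s ≤ 1 := by
    rintro _ ⟨x, hx, y, hy, S, hS, hxp, hyp, rfl⟩
    rw [smul_apply, hscale, inv_mul_le_one₀ hpos]
    exact le_csSup hφ ⟨x, hx, y, hy, S, hS, hxp, hyp, rfl⟩
  have := norm_apply_le_tripNorm sf hnormalized T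
  rw [smul_apply, hscale, inv_mul_le_iff₀ hpos] at this
  linarith

/-- The vector functional `ω_{ξ,η}` of the paper. -/
def vectorFunctional (η ξ : H) : (H →L[ℂ] H) →L[ℂ] ℂ :=
  (innerSL ℂ η).comp (ContinuousLinearMap.apply ℂ H ξ)

theorem dualSet_vectorFunctional_le (hp : 0 ≤ p) {η ξ : H} (hη : MemLq sf p η)
    (hξ : MemLq sf p ξ) :
    ∀ s ∈ dualSet sf p (vectorFunctional η ξ), s ≤ LqNorm sf p η * LqNorm sf p ξ := by
  rintro _ ⟨x, hx, y, hy, S, hS, hxp, hyp, rfl⟩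
  have hxη : ‖star x η‖ ≤ LqNorm sf p η :=
    norm_apply_le_LqNorm sf hη (star_mem hx) ((pNorm_star sf hp hx).trans_le hxp)
  have hSyξ : ‖S (y ξ)‖ ≤ LqNorm sf p ξ :=
    (S.le_of_opNorm_le hS _).trans ((one_mul _).trans_le (norm_apply_le_LqNorm sf hξ hy hyp))
  calc ‖vectorFunctional η ξ (x * S * y)‖ = ‖inner ℂ η (x (S (y ξ)))‖ := rfl
    _ = ‖inner ℂ (star x η) (S (y ξ))‖ := by
        rw [ContinuousLinearMap.star_eq_adjoint, ContinuousLinearMap.adjoint_inner_left]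
    _ ≤ ‖star x η‖ * ‖S (y ξ)‖ := norm_inner_le_norm _ _
    _ ≤ LqNorm sf p η * LqNorm sf p ξ :=
        mul_le_mul hxη hSyξ (norm_nonneg _) (LqNorm_nonneg sf hη)

end Norms

/-- If `T ∈ B(L²M)`, then `T` maps `L^qM` to `L^{q'}M` with
`‖Tξ‖_{q'} ≤ |||T|||_p ‖ξ‖_q` for all `ξ ∈ L^qM` (so if `|||T|||_p ≤ 1` it maps the
unit ball of `L^qM` into the unit ball of `L^{q'}M`). -/
theorem tripNorm_Lq_to_Lq' (sf : StandardForm M) (p : ℝ) (hp : 2 ≤ p)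
    (T : H →L[ℂ] H) (ξ : H) (hξ : MemLq sf p ξ) :
    LqDualNorm sf p (T ξ) ≤ tripNorm sf p T * LqNorm sf p ξ := by
  have hξ0 := LqNorm_nonneg sf hξ
  refine Real.sSup_le ?_ (mul_nonneg (tripNorm_nonneg sf T) hξ0)
  rintro _ ⟨η, hη, hη1, rfl⟩
  have hω := dualSet_vectorFunctional_le sf (by linarith) hη hξ
  calc ‖inner ℂ η (T ξ)‖ = ‖vectorFunctional η ξ T‖ := rfl
    _ ≤ tripNorm sf p T * BpNorm sf p (vectorFunctional η ξ) :=
        norm_apply_le_tripNorm_mul_BpNorm sf ⟨_, hω⟩ T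
    _ ≤ tripNorm sf p T * (LqNorm sf p η * LqNorm sf p ξ) := by
        gcongr
        · exact tripNorm_nonneg sf T
        · exact Real.sSup_le hω (mul_nonneg (LqNorm_nonneg sf hη) hξ0)
    _ ≤ tripNorm sf p T * LqNorm sf p ξ := by
        gcongr
        · exact tripNorm_nonneg sf T
        · exact mul_le_of_le_one_left hξ0 hη1
end
end

section
/- Let (M,τ) be a tracial von Neumann algebra, B a Banach M-bimodule, and δ: M → B a derivation (automatically norm-bounded). Then δ is ‖·‖₂–q_M continuous on the unit ball of M: for every ε > 0 and x ∈ (M)₁ with ‖x‖₂ ≤ (ε/2)^{3/2}, there exists a projection p ∈ M with τ(1-p) ≤ ε and ‖p δ(x) p‖ ≤ ε‖δ‖. -/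
noncomputable section

variable {H : Type*} [NormedAddCommGroup H] [InnerProductSpace ℂ H] [CompleteSpace H]

variable {M : VonNeumannAlgebra H}

/-- `e` is an orthogonal projection. -/
def IsProjection (e : H →L[ℂ] H) : Prop := IsSelfAdjoint e ∧ e * e = e

/-- A Banach `M`-bimodule: a Banach space with commuting contractive left and right
`B(H)`-module actions (restricted to `M` in applications). -/
structure BanachBimodule (M : VonNeumannAlgebra H) (V : Type*)
    [NormedAddCommGroup V] [NormedSpace ℂ V] where
  lsmul : (H →L[ℂ] H) → V → V
  rsmul : V → (H →L[ℂ] H) → V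
  lsmul_add : ∀ x v w, lsmul x (v + w) = lsmul x v + lsmul x w
  add_lsmul : ∀ x y v, lsmul (x + y) v = lsmul x v + lsmul y v
  rsmul_add : ∀ v w x, rsmul (v + w) x = rsmul v x + rsmul w x
  add_rsmul : ∀ v x y, rsmul v (x + y) = rsmul v x + rsmul v y
  lsmul_mul : ∀ x y v, lsmul (x * y) v = lsmul x (lsmul y v)
  rsmul_mul : ∀ v x y, rsmul (rsmul v x) y = rsmul v (x * y)
  lsmul_rsmul : ∀ x v y, rsmul (lsmul x v) y = lsmul x (rsmul v y)
  one_lsmul : ∀ v, lsmul 1 v = v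
  rsmul_one : ∀ v, rsmul v 1 = v
  lsmul_smul : ∀ (c : ℂ) x v, lsmul (c • x) v = c • lsmul x v
  rsmul_smul : ∀ (c : ℂ) v x, rsmul v (c • x) = c • rsmul v x
  norm_lsmul : ∀ x v, ‖lsmul x v‖ ≤ ‖x‖ * ‖v‖
  norm_rsmul : ∀ v x, ‖rsmul v x‖ ≤ ‖v‖ * ‖x‖

/-! With `a = x*x + xx*` and `e` the spectral projection of `a` for `(-∞, (ε/2)²]`, we have
`e a e ≤ (ε/2)² e`, whence `‖xe‖, ‖ex‖ ≤ ε/2`, and Markov's inequality `(ε/2)² (1 - e) ≤ a` with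
`τ(a) = 2‖x‖₂² ≤ 2(ε/2)³` gives `τ(1 - e) ≤ ε`. The Leibniz rule turns `e δ(x) e` into
`e δ(xe) - (ex) δ(e)`, and both terms have norm at most `(ε/2) C`. -/

/-- The spectral projection of `a` for `(-∞, c]`: without a Borel functional calculus it is
realised as the projection onto the kernel of `(a - c)₊`. -/
def spectralProjIic (a : H →L[ℂ] H) (c : ℝ) : H →L[ℂ] H :=
  (cfc (fun t : ℝ => max (t - c) 0) a).ker.starProjection

section spectralProjIic

variable (a : H →L[ℂ] H) (c : ℝ)

lemma isStarProjection_spectralProjIic : IsStarProjection (spectralProjIic a c) :=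
  isStarProjection_starProjection

lemma range_spectralProjIic :
    (spectralProjIic a c).range = (cfc (fun t : ℝ => max (t - c) 0) a).ker :=
  Submodule.range_starProjection _

lemma spectralProjIic_apply_eq_self_iff {u : H} :
    spectralProjIic a c u = u ↔ cfc (fun t : ℝ => max (t - c) 0) a u = 0 :=
  Submodule.starProjection_eq_self_iff

lemma cfc_mul_spectralProjIic :
    cfc (fun t : ℝ => max (t - c) 0) a * spectralProjIic a c = 0 := by
  ext u
  exact (range_spectralProjIic a c ▸ LinearMap.mem_range_self _ u : _)

lemma spectralProjIic_mul_cfc :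
    spectralProjIic a c * cfc (fun t : ℝ => max (t - c) 0) a = 0 := by
  have hg : IsSelfAdjoint (cfc (fun t : ℝ => max (t - c) 0) a) := cfc_predicate _ _
  simpa [(isStarProjection_spectralProjIic a c).isSelfAdjoint.star_eq, hg.star_eq]
    using congr(star $(cfc_mul_spectralProjIic a c))

variable {a}

lemma spectralProjIic_mem (ha : a ∈ M) : spectralProjIic a c ∈ M := by
  rw [VonNeumannAlgebra.IsStarProjection.mem_iff (isStarProjection_spectralProjIic a c),
    range_spectralProjIic]
  intro y hy u hu
  have hcomm : Commute (cfc (fun t : ℝ => max (t - c) 0) a) y :=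
    .cfc_real (VonNeumannAlgebra.mem_commutant_iff.mp hy a ha) _
  simp only [Submodule.mem_comap, LinearMap.mem_ker, ContinuousLinearMap.coe_coe] at hu ⊢
  simpa [hu] using congr($(hcomm.eq) u)

lemma spectralProjIic_conj_le (ha : IsSelfAdjoint a) :
    spectralProjIic a c * a * spectralProjIic a c ≤ c • spectralProjIic a c := by
  set e := spectralProjIic a c
  have he : IsStarProjection e := isStarProjection_spectralProjIic a c
  have hle : a ≤ algebraMap ℝ _ c + cfc (fun t : ℝ => max (t - c) 0) a := by
    calc a = cfc (fun t : ℝ => t) a := (cfc_id' ℝ a).symm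
      _ ≤ cfc (fun t : ℝ => c + max (t - c) 0) a :=
          cfc_mono fun t _ => by linarith [le_max_left (t - c) 0]
      _ = _ := cfc_const_add ..
  calc e * a * e ≤ e * (algebraMap ℝ _ c + cfc (fun t : ℝ => max (t - c) 0) a) * e :=
        he.isSelfAdjoint.conjugate_le_conjugate hle
    _ = c • e := by
        rw [mul_add, add_mul, spectralProjIic_mul_cfc, zero_mul, add_zero,
          Algebra.algebraMap_eq_smul_one, mul_smul_comm, mul_one, smul_mul_assoc,
          he.isIdempotentElem.eq]

lemma cfc_max_const_sub_le_smul_spectralProjIic (ha : 0 ≤ a) (hc : 0 ≤ c) :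
    cfc (fun t : ℝ => max (c - t) 0) a ≤ c • spectralProjIic a c := by
  set e := spectralProjIic a c
  have he : IsStarProjection e := isStarProjection_spectralProjIic a c
  set h := cfc (fun t : ℝ => max (c - t) 0) a
  -- `(c - a)₊` is killed by `(a - c)₊`, so its range lies under `e`.
  have hgh : cfc (fun t : ℝ => max (t - c) 0) a * h = 0 := by
    rw [← cfc_mul .., ← cfc_zero ℝ a]
    exact cfc_congr fun t _ => by rcases le_total t c with h | h <;> simp [h]
  have heh : e * h = h := by
    ext u
    exact (spectralProjIic_apply_eq_self_iff a c).mpr congr($hgh u)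
  have hhe : h * e = h := by
    have hh : IsSelfAdjoint h := cfc_predicate _ _
    simpa [he.isSelfAdjoint.star_eq, hh.star_eq] using congr(star $heh)
  have hhc : h ≤ algebraMap ℝ _ c := by
    refine cfc_le_algebraMap _ c a (fun t ht => ?_) (ha := .of_nonneg ha)
    have := spectrum_nonneg_of_nonneg ha ht
    exact max_le (by linarith) hc
  calc h = e * h * e := by rw [heh, hhe]
    _ ≤ e * algebraMap ℝ _ c * e := he.isSelfAdjoint.conjugate_le_conjugate hhc
    _ = c • e := by
        rw [Algebra.algebraMap_eq_smul_one, mul_smul_comm, mul_one, smul_mul_assoc,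
          he.isIdempotentElem.eq]

lemma smul_one_sub_spectralProjIic_le (ha : 0 ≤ a) (hc : 0 ≤ c) :
    c • (1 - spectralProjIic a c) ≤ a := by
  have hdecomp : a = algebraMap ℝ _ c + cfc (fun t : ℝ => max (t - c) 0) a
      - cfc (fun t : ℝ => max (c - t) 0) a := by
    calc a = cfc (fun t : ℝ => t) a := (cfc_id' ℝ a).symm
      _ = cfc (fun t : ℝ => (c + max (t - c) 0) - max (c - t) 0) a :=
          cfc_congr fun t _ => by rcases le_total t c with h | h <;> simp [h]
      _ = _ := by rw [cfc_sub .., cfc_const_add ..]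
  have hg : 0 ≤ cfc (fun t : ℝ => max (t - c) 0) a := cfc_nonneg fun t _ => le_max_right _ _
  calc c • (1 - spectralProjIic a c) = algebraMap ℝ _ c - c • spectralProjIic a c := by
        rw [smul_sub, Algebra.algebraMap_eq_smul_one]
    _ ≤ algebraMap ℝ _ c + cfc (fun t : ℝ => max (t - c) 0) a
          - cfc (fun t : ℝ => max (c - t) 0) a := by
        rw [add_sub_right_comm]
        exact le_add_of_le_of_nonneg
          (sub_le_sub_left (cfc_max_const_sub_le_smul_spectralProjIic c ha hc) _) hg
    _ = a := hdecomp.symm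

lemma norm_mul_spectralProjIic_le (ha : IsSelfAdjoint a) {r : ℝ} (hr : 0 ≤ r)
    {y : H →L[ℂ] H} (hy : star y * y ≤ a) : ‖y * spectralProjIic a (r ^ 2)‖ ≤ r := by
  set e := spectralProjIic a (r ^ 2)
  have he : IsStarProjection e := isStarProjection_spectralProjIic a _
  have hle : star (y * e) * (y * e) ≤ r ^ 2 • e := by
    calc star (y * e) * (y * e) = e * (star y * y) * e := by
          simp only [star_mul, he.isSelfAdjoint.star_eq, mul_assoc]
      _ ≤ e * a * e := he.isSelfAdjoint.conjugate_le_conjugate hy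
      _ ≤ r ^ 2 • e := spectralProjIic_conj_le _ ha
  have hsq : ‖y * e‖ ^ 2 ≤ r ^ 2 := by
    calc ‖y * e‖ ^ 2 = ‖star (y * e) * (y * e)‖ := by rw [CStarRing.norm_star_mul_self, sq]
      _ ≤ ‖r ^ 2 • e‖ := CStarAlgebra.norm_le_norm_of_nonneg_of_le (star_mul_self_nonneg _) hle
      _ ≤ r ^ 2 := by
          rw [norm_smul, Real.norm_of_nonneg (by positivity)]
          exact mul_le_of_le_one_right (by positivity) (he.norm_le e)
  exact (pow_le_pow_iff_left₀ (norm_nonneg _) hr two_ne_zero).mp hsq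

end spectralProjIic

lemma StandardForm.nontrivial (sf : StandardForm M) : Nontrivial H :=
  ⟨⟨sf.Ω, 0, fun h => by simpa [h] using sf.norm_Ω⟩⟩

section trace

variable (sf : StandardForm M)

lemma re_SFtrace_mono {S T : H →L[ℂ] H} (h : S ≤ T) :
    (SFtrace sf S).re ≤ (SFtrace sf T).re := by
  have := (ContinuousLinearMap.le_def S T).mp h |>.re_inner_nonneg_left sf.Ω
  simpa [SFtrace, inner_sub_left] using this

lemma re_SFtrace_star_mul_self (y : H →L[ℂ] H) :
    (SFtrace sf (star y * y)).re = ‖y sf.Ω‖ ^ 2 := by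
  rw [SFtrace, mul_apply_eq_comp, ContinuousLinearMap.star_eq_adjoint,
    ContinuousLinearMap.adjoint_inner_left, inner_self_eq_norm_sq_to_K]
  norm_cast

lemma re_SFtrace_star_mul_self_add_mul_star {x : H →L[ℂ] H} (hx : x ∈ M) :
    (SFtrace sf (star x * x + x * star x)).re = 2 * ‖x sf.Ω‖ ^ 2 := by
  have htr : SFtrace sf (x * star x) = SFtrace sf (star x * x) :=
    sf.tracial x hx (star x) (star_mem hx)
  rw [SFtrace, add_apply, inner_add_left, ← SFtrace, ← SFtrace, htr, Complex.add_re,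
    re_SFtrace_star_mul_self]
  ring

lemma mul_re_SFtrace_one_sub_spectralProjIic_le {a : H →L[ℂ] H} (ha : 0 ≤ a) {c : ℝ}
    (hc : 0 ≤ c) : c * (SFtrace sf (1 - spectralProjIic a c)).re ≤ (SFtrace sf a).re := by
  have h := re_SFtrace_mono sf (smul_one_sub_spectralProjIic_le c ha hc)
  simpa [SFtrace, smul_apply, inner_smul_real_left] using h

lemma re_SFtrace_one_sub_spectralProjIic_le {x : H →L[ℂ] H} (hx : x ∈ M) {r : ℝ} (hr : 0 < r)
    (hxΩ : ‖x sf.Ω‖ ^ 2 ≤ r ^ 3) :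
    (SFtrace sf (1 - spectralProjIic (star x * x + x * star x) (r ^ 2))).re ≤ 2 * r := by
  have h := mul_re_SFtrace_one_sub_spectralProjIic_le sf
    (add_nonneg (star_mul_self_nonneg x) (mul_star_self_nonneg x)) (sq_nonneg r)
  rw [re_SFtrace_star_mul_self_add_mul_star sf hx] at h
  refine le_of_mul_le_mul_left ?_ (pow_pos hr 2)
  linarith

end trace

lemma sq_le_pow_three_of_le_rpow {s r : ℝ} (hs : 0 ≤ s) (hr : 0 ≤ r)
    (h : s ≤ r ^ ((3 : ℝ) / 2)) : s ^ 2 ≤ r ^ 3 := by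
  calc s ^ 2 ≤ (r ^ ((3 : ℝ) / 2)) ^ 2 := by gcongr
    _ = r ^ 3 := by rw [← Real.rpow_mul_natCast hr]; norm_num

lemma norm_lsmul_rsmul_derivation_le {V : Type*} [NormedAddCommGroup V] [NormedSpace ℂ V]
    (B : BanachBimodule M V) {δ : (H →L[ℂ] H) → V}
    (hder : ∀ x ∈ M, ∀ y ∈ M, δ (x * y) = B.lsmul x (δ y) + B.rsmul (δ x) y)
    {C : ℝ} (hC : ∀ x ∈ M, ‖δ x‖ ≤ C * ‖x‖) (hC0 : 0 ≤ C)
    {x p : H →L[ℂ] H} (hx : x ∈ M) (hp : p ∈ M) (hp1 : ‖p‖ ≤ 1) :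
    ‖B.lsmul p (B.rsmul (δ x) p)‖ ≤ C * ‖x * p‖ + ‖p * x‖ * C := by
  have hsplit :
      B.lsmul p (B.rsmul (δ x) p) = B.lsmul p (δ (x * p)) - B.lsmul (p * x) (δ p) := by
    rw [hder x hx p hp, B.lsmul_add, B.lsmul_mul, add_sub_cancel_left]
  calc ‖B.lsmul p (B.rsmul (δ x) p)‖
      ≤ ‖B.lsmul p (δ (x * p))‖ + ‖B.lsmul (p * x) (δ p)‖ := hsplit ▸ norm_sub_le _ _
    _ ≤ 1 * (C * ‖x * p‖) + ‖p * x‖ * (C * 1) := by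
        gcongr
        · exact (B.norm_lsmul _ _).trans (by gcongr; exact hC _ (mul_mem hx hp))
        · exact (B.norm_lsmul _ _).trans (by gcongr; exact (hC p hp).trans (by gcongr))
    _ = C * ‖x * p‖ + ‖p * x‖ * C := by ring

theorem derivation_smooth_general {V : Type*} [NormedAddCommGroup V] [NormedSpace ℂ V]
    (sf : StandardForm M) (B : BanachBimodule M V)
    (δ : (H →L[ℂ] H) → V)
    (hder : ∀ x ∈ M, ∀ y ∈ M, δ (x * y) = B.lsmul x (δ y) + B.rsmul (δ x) y)
    (C : ℝ) (hC : ∀ x ∈ M, ‖δ x‖ ≤ C * ‖x‖)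
    (ε : ℝ) (hε : 0 < ε) (x : H →L[ℂ] H) (hx : x ∈ M)
    (hx2 : ‖x sf.Ω‖ ≤ (ε / 2) ^ ((3 : ℝ) / 2)) :
    ∃ e ∈ M, IsProjection e ∧ (SFtrace sf (1 - e)).re ≤ ε ∧
      ‖B.lsmul e (B.rsmul (δ x) e)‖ ≤ ε * C := by
  have hr : 0 < ε / 2 := by positivity
  have hC0 : 0 ≤ C := by
    have := sf.nontrivial
    simpa using (norm_nonneg _).trans (hC 1 (one_mem M))
  set a := star x * x + x * star x
  have ha : IsSelfAdjoint a :=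
    .of_nonneg (add_nonneg (star_mul_self_nonneg x) (mul_star_self_nonneg x))
  have haM : a ∈ M := add_mem (mul_mem (star_mem hx) hx) (mul_mem hx (star_mem hx))
  set e := spectralProjIic a ((ε / 2) ^ 2)
  have he : IsStarProjection e := isStarProjection_spectralProjIic a _
  have hxe : ‖x * e‖ ≤ ε / 2 :=
    norm_mul_spectralProjIic_le ha hr.le (le_add_of_nonneg_right (mul_star_self_nonneg x))
  have hex : ‖e * x‖ ≤ ε / 2 := by
    rw [← norm_star, star_mul, he.isSelfAdjoint.star_eq]
    exact norm_mul_spectralProjIic_le ha hr.le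
      (by rw [star_star]; exact le_add_of_nonneg_left (star_mul_self_nonneg x))
  refine ⟨e, spectralProjIic_mem _ haM, ⟨he.isSelfAdjoint, he.isIdempotentElem.eq⟩, ?_, ?_⟩
  · linarith [re_SFtrace_one_sub_spectralProjIic_le sf hx hr
      (sq_le_pow_three_of_le_rpow (norm_nonneg _) hr.le hx2)]
  · calc ‖B.lsmul e (B.rsmul (δ x) e)‖ ≤ C * ‖x * e‖ + ‖e * x‖ * C :=
          norm_lsmul_rsmul_derivation_le B hder hC hC0 hx (spectralProjIic_mem _ haM) (he.norm_le e)
      _ ≤ C * (ε / 2) + ε / 2 * C := by gcongr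
      _ = ε * C := by ring

/-- A derivation `δ : M → V` into a Banach `M`-bimodule (with norm
bound `‖δ(x)‖ ≤ C ‖x‖`) is automatically `‖·‖₂`–`q_M` continuous on the unit ball:
for every `ε > 0` and `x ∈ (M)₁` with `‖x‖₂ = ‖xΩ‖ ≤ (ε/2)^{3/2}`, there is a
projection `e ∈ M` with `τ(1-e) ≤ ε` and `‖e δ(x) e‖ ≤ ε C`. -/
theorem derivation_smooth {V : Type*} [NormedAddCommGroup V] [NormedSpace ℂ V]
    (sf : StandardForm M) (B : BanachBimodule M V)
    (δ : (H →L[ℂ] H) → V)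
    (hadd : ∀ x ∈ M, ∀ y ∈ M, δ (x + y) = δ x + δ y)
    (hsmul : ∀ (c : ℂ), ∀ x ∈ M, δ (c • x) = c • δ x)
    (hder : ∀ x ∈ M, ∀ y ∈ M, δ (x * y) = B.lsmul x (δ y) + B.rsmul (δ x) y)
    (C : ℝ) (hC : ∀ x ∈ M, ‖δ x‖ ≤ C * ‖x‖)
    (ε : ℝ) (hε : 0 < ε) (x : H →L[ℂ] H) (hx : x ∈ M) (hx1 : ‖x‖ ≤ 1)
    (hx2 : ‖x sf.Ω‖ ≤ (ε / 2) ^ ((3 : ℝ) / 2)) :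
    ∃ e ∈ M, IsProjection e ∧ (SFtrace sf (1 - e)).re ≤ ε ∧
      ‖B.lsmul e (B.rsmul (δ x) e)‖ ≤ ε * C :=
  derivation_smooth_general sf B δ hder C hC ε hε x hx hx2
end
end
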